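/- With $D = \frac{e^{1-\gamma/2}}{\sqrt{2}}$ and $R_n$ defined via the blocks $B_k$ as above, for every $n \ge 2$ one has $R_{n+1} - R_n \le \left(2\sqrt{2} - 4e^{\gamma/2 - 1}\right) n^{\log_2\left(2^{-3/2}e^{1-\gamma/2}\right)}$. -/

import Mathlib

open Real

noncomputable def Rseq (D : ℝ) (n : ℕ) : ℝ :=
  if n ≤ 1 then 1
  else Real.sqrt 2 * (D ^ (Nat.clog 2 n - 1) +
    ((n : ℝ) - 2 ^ (Nat.clog 2 n - 1) - 1) *
      (D ^ Nat.clog 2 n - D ^ (Nat.clog 2 n - 1)) / 2 ^ (Nat.clog 2 n - 1))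

/-!
On the block `B_k = (2^(k-1), 2^k]` the sequence `R` is linear with slope
`√2 (D^k - D^(k-1)) / 2^(k-1) = 2√2 (1 - D⁻¹) (D/2)^k`, and the step from `2^k` to `2^k + 1`
has the same size. For `1 ≤ D ≤ 2` the exponent `log₂ (D/2)` is nonpositive, so `n ≤ 2^k` gives
`(D/2)^k = (2^k)^(log₂ (D/2)) ≤ n^(log₂ (D/2))`. For `D = e^(1-γ/2)/√2` one has
`2√2 (1 - D⁻¹) = 2√2 - 4e^(γ/2-1)` and `D/2 = 2^(-3/2) e^(1-γ/2)`.
-/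

theorem Rseq_succ_sub (D : ℝ) {n : ℕ} (hn : 2 ≤ n) :
    Rseq D (n + 1) - Rseq D n =
      √2 * (D ^ Nat.clog 2 n - D ^ (Nat.clog 2 n - 1)) / 2 ^ (Nat.clog 2 n - 1) := by
  obtain ⟨m, hm⟩ : ∃ m, Nat.clog 2 n = m + 1 :=
    Nat.exists_eq_add_one_of_ne_zero (Nat.clog_pos one_lt_two hn).ne'
  have hn_gt : ¬ n ≤ 1 := by omega
  have hn_succ_gt : ¬ n + 1 ≤ 1 := by omega
  by_cases hpow : 2 ^ Nat.clog 2 n = n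
  · -- `n` is the last element of its block and `n + 1` the first of the next one.
    have hsucc : Nat.clog 2 (n + 1) = m + 2 := by
      refine le_antisymm (Nat.clog_le_of_le_pow ?_) ?_
      · rw [hm] at hpow
        rw [pow_succ, hpow]
        omega
      · have := (Nat.clog_lt_clog_succ_iff one_lt_two).2 hpow
        omega
    have hcast : (n : ℝ) = 2 ^ (m + 1) := by
      rw [← hm]
      exact_mod_cast hpow.symm
    simp only [Rseq, if_neg hn_gt, if_neg hn_succ_gt, hsucc, hm, Nat.add_sub_cancel]
    push_cast
    rw [hcast]
    field_simp
    ring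
  · have hsucc : Nat.clog 2 (n + 1) = Nat.clog 2 n :=
      ((Nat.clog_eq_clog_succ_iff one_lt_two).2 hpow).symm
    simp only [Rseq, if_neg hn_gt, if_neg hn_succ_gt, hsucc]
    push_cast
    ring

theorem sub_pow_pred_div_two_pow {x : ℝ} (hx : x ≠ 0) {k : ℕ} (hk : k ≠ 0) :
    (x ^ k - x ^ (k - 1)) / 2 ^ (k - 1) = 2 * (1 - x⁻¹) * (x / 2) ^ k := by
  obtain ⟨m, rfl⟩ := Nat.exists_eq_add_one_of_ne_zero hk
  rw [Nat.add_sub_cancel, div_pow]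
  field_simp
  ring

theorem pow_le_rpow_logb {b a x : ℝ} (hb : 1 < b) (ha₀ : 0 < a) (ha₁ : a ≤ 1) (hx : 0 < x)
    {k : ℕ} (hxk : x ≤ b ^ k) : a ^ k ≤ x ^ logb b a := by
  have hpow : (b ^ k) ^ logb b a = a ^ k := by
    rw [← rpow_natCast, ← rpow_mul (by linarith), mul_comm, rpow_mul (by linarith),
      rpow_logb (by linarith) hb.ne' ha₀, rpow_natCast]
  rw [← hpow]
  exact rpow_le_rpow_of_nonpos hx hxk (logb_nonpos hb ha₀.le ha₁)

theorem Rseq_succ_sub_le {D : ℝ} (hD₁ : 1 ≤ D) (hD₂ : D ≤ 2) {n : ℕ} (hn : 2 ≤ n) :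
    Rseq D (n + 1) - Rseq D n ≤ 2 * √2 * (1 - D⁻¹) * (n : ℝ) ^ logb 2 (D / 2) := by
  have hk : Nat.clog 2 n ≠ 0 := (Nat.clog_pos one_lt_two hn).ne'
  have hconst : 0 ≤ 2 * √2 * (1 - D⁻¹) :=
    mul_nonneg (by positivity) (sub_nonneg.2 (inv_le_one_of_one_le₀ hD₁))
  have hn_le : (n : ℝ) ≤ 2 ^ Nat.clog 2 n := by exact_mod_cast Nat.le_pow_clog one_lt_two n
  calc Rseq D (n + 1) - Rseq D n = 2 * √2 * (1 - D⁻¹) * (D / 2) ^ Nat.clog 2 n := by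
        rw [Rseq_succ_sub D hn, mul_div_assoc, sub_pow_pred_div_two_pow (by positivity) hk]
        ring
    _ ≤ 2 * √2 * (1 - D⁻¹) * (n : ℝ) ^ logb 2 (D / 2) :=
        mul_le_mul_of_nonneg_left (pow_le_rpow_logb one_lt_two (by positivity) (by linarith)
          (by positivity) hn_le) hconst

theorem sqrt_two_lt_exp_one_sub_eulerMascheroniConstant_half :
    √2 < exp (1 - eulerMascheroniConstant / 2) := by
  have hγ := eulerMascheroniConstant_lt_two_thirds
  have hexp := add_one_le_exp (1 - eulerMascheroniConstant / 2)
  have hsqrt : √2 < 3 / 2 := by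
    rw [sqrt_lt' (by norm_num)]
    norm_num
  linarith

theorem exp_one_sub_eulerMascheroniConstant_half_lt :
    exp (1 - eulerMascheroniConstant / 2) < 2 * √2 := by
  have hγ : 0 < eulerMascheroniConstant := by
    linarith [one_half_lt_eulerMascheroniConstant]
  have hsqrt : 1.4 < √2 := by
    rw [lt_sqrt (by norm_num)]
    norm_num
  calc exp (1 - eulerMascheroniConstant / 2) < exp 1 := exp_lt_exp.2 (by linarith)
    _ < 2.7182818286 := exp_one_lt_d9
    _ < 2 * √2 := by linarith

theorem Rseq_diff_le (n : ℕ) (hn : 2 ≤ n) :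
    Rseq (Real.exp (1 - Real.eulerMascheroniConstant / 2) / Real.sqrt 2) (n + 1) -
        Rseq (Real.exp (1 - Real.eulerMascheroniConstant / 2) / Real.sqrt 2) n ≤
      (2 * Real.sqrt 2 - 4 * Real.exp (Real.eulerMascheroniConstant / 2 - 1)) *
        (n : ℝ) ^ (Real.logb 2 ((2 : ℝ) ^ (-(3 : ℝ) / 2) *
          Real.exp (1 - Real.eulerMascheroniConstant / 2))) := by
  set E := exp (1 - eulerMascheroniConstant / 2)
  have hE_lower := sqrt_two_lt_exp_one_sub_eulerMascheroniConstant_half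
  have hE_upper := exp_one_sub_eulerMascheroniConstant_half_lt
  have hsqrt : (0 : ℝ) < √2 := by positivity
  have hD₁ : 1 ≤ E / √2 := (one_le_div hsqrt).2 hE_lower.le
  have hD₂ : E / √2 ≤ 2 := (div_le_iff₀ hsqrt).2 hE_upper.le
  have harg : (2 : ℝ) ^ (-(3 : ℝ) / 2) * E = E / √2 / 2 := by
    rw [neg_div, rpow_neg zero_le_two, show (3 : ℝ) / 2 = 1 + 1 / 2 by norm_num,
      rpow_add zero_lt_two, rpow_one, ← sqrt_eq_rpow]
    field_simp
  have hconst :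
      2 * √2 * (1 - (E / √2)⁻¹) = 2 * √2 - 4 * exp (eulerMascheroniConstant / 2 - 1) := by
    have hE_inv : exp (eulerMascheroniConstant / 2 - 1) = E⁻¹ := by
      rw [← exp_neg, neg_sub]
    have hE : E ≠ 0 := (hsqrt.trans hE_lower).ne'
    rw [hE_inv]
    field_simp
    linear_combination (-2 : ℝ) * sq_sqrt zero_le_two
  rw [harg, ← hconst]
  exact Rseq_succ_sub_le hD₁ hD₂ hn
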